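/- Let p be a prime and 2 ≤ a ≤ p − 1. In the linear Alexander quandle X = Λ_p/(t − a), the isotropy subgroup of Inn(X) at 0 is exactly the cyclic group ⟨s_0⟩ generated by s_0 (where s_0(y) = a·y). -/

import Mathlib

/-- A quandle given by a family of permutations `s x` satisfying
`s x x = x` and `s x ∘ s y = s (s x y) ∘ s x`. -/
structure SQuandle (X : Type*) where
  s : X → Equiv.Perm X
  fix : ∀ x, s x x = x
  dist : ∀ x y, s x * s y = s (s x y) * s x

/-- The inner automorphism group: the subgroup of permutations generated by the `s x`. -/
def Inn {X : Type*} (s : X → Equiv.Perm X) : Subgroup (Equiv.Perm X) :=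
  Subgroup.closure (Set.range s)

/-- Two-point homogeneity with respect to the inner automorphism group. -/
def TwoPointHomogeneous {X : Type*} (s : X → Equiv.Perm X) : Prop :=
  ∀ x₁ x₂ y₁ y₂ : X, x₁ ≠ x₂ → y₁ ≠ y₂ →
    ∃ f ∈ Inn s, f x₁ = y₁ ∧ f x₂ = y₂

/-- Connectedness: the inner automorphism group acts transitively. -/
def QConnected {X : Type*} (s : X → Equiv.Perm X) : Prop :=
  ∀ x y : X, ∃ f ∈ Inn s, f x = y

/-- Cyclic type: each `s x` acts on `X \ {x}` as a single cycle of order `#X - 1`,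
i.e. `s x` is a cycle whose support is the complement of `{x}`. -/
def CyclicType {X : Type*} [Fintype X] [DecidableEq X] (s : X → Equiv.Perm X) : Prop :=
  ∀ x : X, (s x).IsCycle ∧ (s x).support = {x}ᶜ

/-- The symmetry `y ↦ a*y + (1-a)*x` of the linear Alexander quandle
`Λ_p/(t-a)` on `ZMod p` (`p` prime, `a ≠ 0`). -/
def alexS (p : ℕ) [Fact p.Prime] (a : ZMod p) (ha : a ≠ 0) (x : ZMod p) :
    Equiv.Perm (ZMod p) where
  toFun y := a * y + (1 - a) * x
  invFun y := a⁻¹ * (y - (1 - a) * x)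
  left_inv y := by field_simp; ring
  right_inv y := by field_simp; ring

/-! Each `s x` is affine with linear part `a`, so every inner automorphism has the form
`y ↦ a ^ k * y + c`; fixing `0` forces `c = 0`, which leaves `s 0 ^ k : y ↦ a ^ k * y`. -/

def affineZPowers {K : Type*} [Field K] (a : K) (ha : a ≠ 0) : Subgroup (Equiv.Perm K) where
  carrier := {f | ∃ k : ℤ, ∀ y, f y = a ^ k * y + f 0}
  one_mem' := ⟨0, fun y => by simp⟩
  mul_mem' := by
    rintro f g ⟨k, hf⟩ ⟨l, hg⟩
    refine ⟨k + l, fun y => ?_⟩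
    rw [Equiv.Perm.mul_apply, Equiv.Perm.mul_apply, hf (g y), hf (g 0), hg y, zpow_add₀ ha]
    ring
  inv_mem' := by
    rintro f ⟨k, hf⟩
    have hf0 : a ^ k * f⁻¹ 0 + f 0 = 0 := by rw [← hf]; simp
    refine ⟨-k, fun y => ?_⟩
    rw [Equiv.Perm.inv_eq_iff_eq, hf, zpow_neg, mul_add, mul_inv_cancel_left₀ (zpow_ne_zero k ha),
      add_assoc, hf0, add_zero]

section alexS

variable {p : ℕ} [Fact p.Prime] {a : ZMod p} (ha : a ≠ 0)

@[simp]
lemma alexS_apply (x y : ZMod p) : alexS p a ha x y = a * y + (1 - a) * x := rfl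

lemma alexS_zero_eq_toPermHom :
    alexS p a ha 0 = MulAction.toPermHom (ZMod p)ˣ (ZMod p) (Units.mk0 a ha) := by
  ext y
  simp

lemma alexS_zero_zpow_apply (k : ℤ) (y : ZMod p) : (alexS p a ha 0 ^ k) y = a ^ k * y := by
  rw [alexS_zero_eq_toPermHom, ← map_zpow, MulAction.toPermHom_apply, MulAction.toPerm_apply,
    Units.smul_def, Units.val_zpow_eq_zpow_val, Units.val_mk0, smul_eq_mul]

lemma inn_alexS_le_affineZPowers : Inn (alexS p a ha) ≤ affineZPowers a ha := by
  refine Subgroup.closure_le _ |>.mpr ?_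
  rintro _ ⟨x, rfl⟩
  exact ⟨1, fun y => by simp⟩

end alexS

theorem alex_isotropy_at_zero_general (p : ℕ) [Fact p.Prime] (a : ZMod p)
    (ha : a ≠ 0) :
    ∀ f : Equiv.Perm (ZMod p),
      (f ∈ Inn (alexS p a ha) ∧ f 0 = 0) ↔
        f ∈ Subgroup.zpowers (alexS p a ha 0) := by
  intro f
  constructor
  · rintro ⟨hf, hf0⟩
    obtain ⟨k, hk⟩ := inn_alexS_le_affineZPowers ha hf
    exact ⟨k, Equiv.ext fun y => by rw [alexS_zero_zpow_apply, hk, hf0, add_zero]⟩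
  · rintro ⟨k, rfl⟩
    exact ⟨Subgroup.zpow_mem _ (Subgroup.subset_closure (Set.mem_range_self 0)) k,
      by rw [alexS_zero_zpow_apply, mul_zero]⟩

/-- the isotropy subgroup of `Inn(Λ_p/(t-a))` at `0` is exactly
the cyclic group generated by `s 0`. -/
theorem alex_isotropy_at_zero (p : ℕ) [Fact p.Prime] (a : ZMod p)
    (ha : a ≠ 0) (ha1 : a ≠ 1) :
    ∀ f : Equiv.Perm (ZMod p),
      (f ∈ Inn (alexS p a ha) ∧ f 0 = 0) ↔
        f ∈ Subgroup.zpowers (alexS p a ha 0) :=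
  alex_isotropy_at_zero_general p a ha
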